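/- Let A[u₁] and B[u₂] be the sets defined above (with fixed prime p, bound w*, and rational r* = b₀*/(q₀*−1) as above). Then for all u₁, u₂ ≤ u*, the distance ρ(A[u₁], B[u₂]) = inf{|α − β| : α ∈ A[u₁], β ∈ B[u₂]} is strictly positive. -/

import Mathlib

/-!
Both sets are compact. Up to the order of the terms, `A[u]` and `B[u] / r*` are finite unions of
continuous images of powers of the compact set `{0} ∪ {p⁻ⁿ}`; a factor `0` is absorbed by a zero
coefficient, and sorting the exponents restores the monotone normal form.

They are disjoint. Clearing denominators in `α = β` gives `(p ^ N₀ - 1) * A = b₀ * B` with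
`B = ∑ bⱼ pᵉʲ`, so `p ^ N₀ - 1 ∣ B`. Since `p ^ N₀ ≡ 1`, reducing the exponents modulo `N₀`
gives a number in the same class which is positive and at most `(p - 1) p ^ (N₀ - 1) < p ^ N₀ - 1`.

Disjoint compact sets lie at positive distance.
-/

/-- The set `A[u]`. -/
def Aset (p u : ℕ) (w : ℝ) : Set ℝ :=
  {x | ∃ (n : Fin u → ℕ) (a : Fin u → ℤ),
    Monotone n ∧ (∀ h : 0 < u, n ⟨0, h⟩ = 0) ∧
    (∀ i, 0 ≤ a i ∧ (a i : ℝ) < w) ∧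
    x = ∑ i, (a i : ℝ) * (p : ℝ) ^ (-(n i : ℤ))}

/-- The set `B[u]`. -/
def Bset (p u : ℕ) (r : ℝ) : Set ℝ :=
  {x | ∃ (hu : 0 < u) (m b : Fin u → ℕ),
    Monotone m ∧ m ⟨0, hu⟩ = 0 ∧ b ⟨0, hu⟩ ≠ 0 ∧
    (∑ i, b i) < p ∧
    x = r * ∑ i, (b i : ℝ) * (p : ℝ) ^ (-(m i : ℤ))}

open Finset in
theorem Nat.not_pow_sub_one_dvd_sum_mul_pow {ι : Type*} [Fintype ι] {p N : ℕ} (hp : 2 ≤ p)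
    (hN : 2 ≤ N) (b e : ι → ℕ) (hb : ∑ i, b i < p) (hb0 : b ≠ 0) :
    ¬ p ^ N - 1 ∣ ∑ i, b i * p ^ e i := by
  set C := ∑ i, b i * p ^ (e i % N)
  -- `p ^ N ≡ 1`, so the exponents may be reduced modulo `N`
  have hmod : ∑ i, b i * p ^ e i ≡ C [MOD p ^ N - 1] := by
    refine Nat.ModEq.sum fun i _ => Nat.ModEq.mul_left _ ?_
    have hpN : p ^ N ≡ 1 [MOD p ^ N - 1] := Nat.modEq_sub (Nat.one_le_pow _ _ (by omega))
    calc p ^ e i = (p ^ N) ^ (e i / N) * p ^ (e i % N) := by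
          rw [← pow_mul, ← pow_add, Nat.div_add_mod]
      _ ≡ 1 ^ (e i / N) * p ^ (e i % N) [MOD p ^ N - 1] := (hpN.pow _).mul_right _
      _ = p ^ (e i % N) := by rw [one_pow, one_mul]
  have hCpos : 0 < C := by
    obtain ⟨i, hi⟩ := Function.ne_iff.mp hb0
    exact lt_of_lt_of_le (Nat.mul_pos (Nat.pos_of_ne_zero hi) (by positivity))
      (single_le_sum (f := fun i => b i * p ^ (e i % N)) (fun _ _ => Nat.zero_le _) (mem_univ i))
  have hClt : C < p ^ N - 1 := by
    have hC : C ≤ (p - 1) * p ^ (N - 1) := calc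
      C ≤ ∑ i, b i * p ^ (N - 1) := sum_le_sum fun i _ => Nat.mul_le_mul_left _
          (Nat.pow_le_pow_right (by omega) (Nat.le_sub_one_of_lt (Nat.mod_lt _ (by omega))))
      _ = (∑ i, b i) * p ^ (N - 1) := (sum_mul ..).symm
      _ ≤ (p - 1) * p ^ (N - 1) := Nat.mul_le_mul_right _ (by omega)
    have hpow : p ^ N = p * p ^ (N - 1) := by rw [← pow_succ']; congr 1; omega
    have hsub : (p - 1) * p ^ (N - 1) = p * p ^ (N - 1) - p ^ (N - 1) := Nat.sub_one_mul _ _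
    have : 2 ≤ p ^ (N - 1) :=
      (Nat.le_self_pow (by omega) 2).trans (Nat.pow_le_pow_left hp _) |>.trans' (by omega)
    omega
  intro hdvd
  exact (Nat.le_of_dvd hCpos ((hmod.dvd_iff dvd_rfl).mp hdvd)).not_gt hClt

theorem Tuple.exists_perm_monotone_comp_apply_zero {α : Type*} [LinearOrder α] {k : ℕ}
    (f : Fin (k + 1) → α) (hf : ∀ i, f 0 ≤ f i) :
    ∃ σ : Equiv.Perm (Fin (k + 1)), Monotone (f ∘ σ) ∧ σ 0 = 0 := by
  set τ := Tuple.sort f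
  set j := τ.symm 0
  -- `f 0` is minimal, so it may be swapped to the front of the sorted tuple
  have hj : (f ∘ τ) 0 = (f ∘ τ) j := by
    refine le_antisymm (Tuple.monotone_sort f (Fin.zero_le j)) ?_
    simpa [j] using hf (τ 0)
  refine ⟨(Equiv.swap 0 j).trans τ, ?_, by simp [j]⟩
  have : f ∘ ((Equiv.swap 0 j).trans τ) = f ∘ τ := by
    rw [Equiv.coe_trans, ← Function.comp_assoc, Equiv.comp_swap_eq_update, hj,
      Function.update_eq_self, ← hj, Function.update_eq_self]
  exact this ▸ Tuple.monotone_sort f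

lemma isCompact_insert_zero_range_zpow_neg {p : ℝ} (hp : 1 < p) :
    IsCompact (insert 0 (Set.range fun n : ℕ => p ^ (-(n : ℤ)))) := by
  refine Filter.Tendsto.isCompact_insert_range ?_
  simp_rw [zpow_neg, zpow_natCast, ← inv_pow]
  exact tendsto_pow_atTop_nhds_zero_of_lt_one (by positivity) (inv_lt_one_of_one_lt₀ hp)

lemma sum_mul_zpow_neg_mul_pow {K : Type*} [Field K] {ι : Type*} [Fintype ι] {p : K} (hp : p ≠ 0)
    (c : ι → K) (n : ι → ℕ) {N : ℕ} (hN : ∀ i, n i ≤ N) :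
    (∑ i, c i * p ^ (-(n i : ℤ))) * p ^ N = ∑ i, c i * p ^ (N - n i) := by
  rw [Finset.sum_mul]
  refine Finset.sum_congr rfl fun i _ => ?_
  rw [pow_sub₀ _ hp (hN i), zpow_neg, zpow_natCast]
  ring

section NegPowSums

variable {k : ℕ} {p : ℝ} {C : Set (Fin (k + 1) → ℝ)}

def negPowSums (p : ℝ) (C : Set (Fin (k + 1) → ℝ)) : Set ℝ :=
  {x | ∃ c ∈ C, ∃ n : Fin (k + 1) → ℕ, Monotone n ∧ n 0 = 0 ∧ x = ∑ i, c i * p ^ (-(n i : ℤ))}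

lemma sum_mem_negPowSums (hperm : ∀ c ∈ C, ∀ σ : Equiv.Perm (Fin (k + 1)), σ 0 = 0 → c ∘ σ ∈ C)
    {c : Fin (k + 1) → ℝ} (hc : c ∈ C) {n : Fin (k + 1) → ℕ} (hn : n 0 = 0) :
    ∑ i, c i * p ^ (-(n i : ℤ)) ∈ negPowSums p C := by
  obtain ⟨σ, hmono, hσ⟩ := Tuple.exists_perm_monotone_comp_apply_zero n (by simp [hn])
  exact ⟨c ∘ σ, hperm c hc σ hσ, n ∘ σ, hmono, by simp [hσ, hn],
    (Equiv.sum_comp σ fun i => c i * p ^ (-(n i : ℤ))).symm⟩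

lemma negPowSums_eq_iUnion_image
    (hperm : ∀ c ∈ C, ∀ σ : Equiv.Perm (Fin (k + 1)), σ 0 = 0 → c ∘ σ ∈ C)
    (hmask : ∀ c ∈ C, ∀ s : Set (Fin (k + 1)), 0 ∈ s → s.indicator c ∈ C) :
    negPowSums p C = ⋃ c ∈ C, (fun t => ∑ i, c i * t i) ''
      ((Set.univ.pi fun _ => insert 0 (Set.range fun n : ℕ => p ^ (-(n : ℤ)))) ∩
        {t | t 0 = 1}) := by
  ext x
  simp only [Set.mem_iUnion, Set.mem_image, Set.mem_inter_iff, Set.mem_univ_pi,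
    Set.mem_ofPred_eq, exists_prop]
  constructor
  · rintro ⟨c, hc, n, -, hn, rfl⟩
    exact ⟨c, hc, fun i => p ^ (-(n i : ℤ)), ⟨fun i => Or.inr ⟨n i, rfl⟩, by simp [hn]⟩, rfl⟩
  · rintro ⟨c, hc, t, ⟨ht, ht0⟩, rfl⟩
    -- the zero entries of `t` are absorbed into the coefficients
    have : ∀ i, ∃ m : ℕ, (t i ≠ 0 → t i = p ^ (-(m : ℤ))) ∧ (t i = 1 → m = 0) := by
      intro i
      by_cases h1 : t i = 1
      · exact ⟨0, fun _ => by simp [h1], fun _ => rfl⟩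
      rcases ht i with h0 | ⟨m, hm⟩
      · exact ⟨0, fun h => absurd h0 h, fun h => absurd h h1⟩
      · exact ⟨m, fun _ => hm.symm, fun h => absurd h h1⟩
    choose n hn hn1 using this
    have hsum : ∑ i, c i * t i = ∑ i, {i | t i ≠ 0}.indicator c i * p ^ (-(n i : ℤ)) := by
      refine Finset.sum_congr rfl fun i _ => ?_
      by_cases h : t i = 0
      · simp [h]
      · simp [h, ← hn i h]
    rw [hsum]
    exact sum_mem_negPowSums hperm (hmask c hc _ (by simp [ht0])) (hn1 0 ht0)

lemma isCompact_negPowSums (hp : 1 < p) (hC : C.Finite)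
    (hperm : ∀ c ∈ C, ∀ σ : Equiv.Perm (Fin (k + 1)), σ 0 = 0 → c ∘ σ ∈ C)
    (hmask : ∀ c ∈ C, ∀ s : Set (Fin (k + 1)), 0 ∈ s → s.indicator c ∈ C) :
    IsCompact (negPowSums p C) := by
  rw [negPowSums_eq_iUnion_image hperm hmask]
  refine hC.isCompact_biUnion fun c _ => IsCompact.image ?_ (by fun_prop)
  exact (isCompact_univ_pi fun _ => isCompact_insert_zero_range_zpow_neg hp).inter_right
    (isClosed_eq (continuous_apply 0) continuous_const)

end NegPowSums

lemma aset_succ_eq (p k : ℕ) (w : ℝ) :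
    Aset p (k + 1) w =
      negPowSums p {c : Fin (k + 1) → ℝ | ∀ i, ∃ a : ℤ, 0 ≤ a ∧ (a : ℝ) < w ∧ c i = a} := by
  ext x
  constructor
  · rintro ⟨n, a, hmono, hn, ha, rfl⟩
    exact ⟨fun i => a i, fun i => ⟨a i, (ha i).1, (ha i).2, rfl⟩, n, hmono, hn k.succ_pos, rfl⟩
  · rintro ⟨c, hc, n, hmono, hn, rfl⟩
    choose a ha0 haw hca using hc
    exact ⟨n, a, hmono, fun _ => hn, fun i => ⟨ha0 i, haw i⟩, by simp only [hca]⟩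

lemma isCompact_aset {p : ℕ} (hp : 2 ≤ p) (u : ℕ) {w : ℝ} (hw : 0 < w) :
    IsCompact (Aset p u w) := by
  rcases u with _ | k
  · refine Set.Subsingleton.isCompact fun x hx y hy => ?_
    obtain ⟨-, -, -, -, -, rfl⟩ := hx
    obtain ⟨-, -, -, -, -, rfl⟩ := hy
    rfl
  rw [aset_succ_eq]
  refine isCompact_negPowSums (by exact_mod_cast hp) ?_ ?_ ?_
  · refine (Set.Finite.pi fun _ => ((Set.finite_Icc (0 : ℤ) ⌈w⌉).image Int.cast)).subset ?_
    rintro c hc i -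
    obtain ⟨a, ha0, haw, hca⟩ := hc i
    exact ⟨a, ⟨ha0, Int.cast_le.mp (haw.le.trans (Int.le_ceil w))⟩, hca.symm⟩
  · exact fun c hc σ _ i => hc (σ i)
  · intro c hc s _ i
    by_cases hi : i ∈ s
    · simpa [hi] using hc i
    · exact ⟨0, le_rfl, by simpa using hw, by simp [hi]⟩

lemma bset_succ_eq (p k : ℕ) (r : ℝ) :
    Bset p (k + 1) r = (r * ·) '' negPowSums p
      {c : Fin (k + 1) → ℝ | ∃ b : Fin (k + 1) → ℕ, b 0 ≠ 0 ∧ ∑ i, b i < p ∧ c = (↑) ∘ b} := by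
  ext x
  constructor
  · rintro ⟨hu, m, b, hmono, hm, hb0, hb, rfl⟩
    exact ⟨_, ⟨_, ⟨b, hb0, hb, rfl⟩, m, hmono, hm, rfl⟩, rfl⟩
  · rintro ⟨y, ⟨c, ⟨b, hb0, hb, rfl⟩, m, hmono, hm, rfl⟩, rfl⟩
    exact ⟨k.succ_pos, m, b, hmono, hm, hb0, hb, rfl⟩

lemma isCompact_bset {p : ℕ} (hp : 2 ≤ p) (u : ℕ) (r : ℝ) : IsCompact (Bset p u r) := by
  rcases u with _ | k
  · convert isCompact_empty
    exact Set.eq_empty_of_forall_notMem fun x ⟨hu, _⟩ => hu.false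
  rw [bset_succ_eq]
  refine IsCompact.image (isCompact_negPowSums (by exact_mod_cast hp) ?_ ?_ ?_) (by fun_prop)
  · refine ((Set.Finite.pi fun _ => Set.finite_Iio p).image ((↑) ∘ ·)).subset ?_
    rintro - ⟨b, -, hb, rfl⟩
    exact ⟨b, fun i _ => (Finset.single_le_sum (fun j _ => Nat.zero_le (b j))
      (Finset.mem_univ i)).trans_lt hb, rfl⟩
  · rintro - ⟨b, hb0, hb, rfl⟩ σ hσ
    exact ⟨b ∘ σ, by simpa [hσ], by rwa [Function.comp_def, Equiv.sum_comp], rfl⟩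
  · rintro - ⟨b, hb0, hb, rfl⟩ s hs
    refine ⟨s.indicator b, by simpa [hs], ?_, Set.indicator_comp_of_zero Nat.cast_zero⟩
    exact (Finset.sum_le_sum fun i _ => Set.indicator_le_self s b i).trans_lt hb

lemma disjoint_aset_bset {p : ℕ} (hp : 2 ≤ p) (w : ℝ) {N₀ b₀ : ℕ} (hN₀ : 2 ≤ N₀)
    (hb₀ : Nat.Coprime b₀ (p ^ N₀ - 1)) {r : ℝ} (hr : r = b₀ / ((p : ℝ) ^ N₀ - 1)) (u₁ u₂ : ℕ) :
    Disjoint (Aset p u₁ w) (Bset p u₂ r) := by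
  rw [Set.disjoint_left]
  rintro x ⟨n, a, -, -, -, rfl⟩ ⟨hu, m, b, -, -, hb0, hb, heq⟩
  obtain ⟨N, hnN, hmN⟩ : ∃ N, (∀ i, n i ≤ N) ∧ ∀ j, m j ≤ N :=
    ⟨Finset.univ.sup n ⊔ Finset.univ.sup m,
      fun i => le_sup_of_le_left (Finset.le_sup (Finset.mem_univ i)),
      fun j => le_sup_of_le_right (Finset.le_sup (Finset.mem_univ j))⟩
  have hp0 : (p : ℝ) ≠ 0 := by positivity
  have hQ : (p : ℝ) ^ N₀ - 1 ≠ 0 := by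
    have : (1 : ℝ) < (p : ℝ) ^ N₀ := one_lt_pow₀ (by exact_mod_cast hp) (by omega)
    linarith
  have hreal : ((p : ℝ) ^ N₀ - 1) * ∑ i, (a i : ℝ) * (p : ℝ) ^ (N - n i) =
      b₀ * ∑ j, (b j : ℝ) * (p : ℝ) ^ (N - m j) := by
    rw [← sum_mul_zpow_neg_mul_pow hp0 _ _ hnN, ← sum_mul_zpow_neg_mul_pow hp0 _ _ hmN, heq, hr]
    field_simp
  have hint : ((p ^ N₀ - 1 : ℕ) : ℤ) * ∑ i, a i * (p : ℤ) ^ (N - n i) =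
      ((b₀ * ∑ j, b j * p ^ (N - m j) : ℕ) : ℤ) := by
    have h1 : 1 ≤ p ^ N₀ := Nat.one_le_pow _ _ (by omega)
    exact_mod_cast hreal
  have hdvd : p ^ N₀ - 1 ∣ ∑ j, b j * p ^ (N - m j) :=
    hb₀.symm.dvd_of_dvd_mul_left (Int.natCast_dvd_natCast.mp ⟨_, hint.symm⟩)
  exact Nat.not_pow_sub_one_dvd_sum_mul_pow hp hN₀ b _ hb (fun h => hb0 (congrFun h _)) hdvd

theorem stmt4_general (p : ℕ) (hp : p.Prime) (w : ℝ) (hw : 0 < w)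
    (N₀ b₀ q₀ : ℕ) (hN₀ : 2 ≤ N₀) (hq₀ : q₀ = p ^ N₀)
    (hb₀ : Nat.gcd b₀ (p * (q₀ - 1)) = 1)
    (r : ℝ) (hr : r = (b₀ : ℝ) / ((q₀ : ℝ) - 1))
    (u₁ u₂ : ℕ) :
    ∃ ε > (0 : ℝ), ∀ α ∈ Aset p u₁ w, ∀ β ∈ Bset p u₂ r, ε ≤ |α - β| := by
  subst hq₀
  have hcop : Nat.Coprime b₀ (p ^ N₀ - 1) := Nat.Coprime.coprime_dvd_right (dvd_mul_left _ p) hb₀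
  push_cast at hr
  obtain ⟨ε, hε, hsep⟩ := Metric.exists_pos_forall_lt_edist (isCompact_aset hp.two_le u₁ hw)
    (isCompact_bset hp.two_le u₂ r).isClosed (disjoint_aset_bset hp.two_le w hN₀ hcop hr u₁ u₂)
  refine ⟨ε, hε, fun α hα β hβ => ?_⟩
  have := hsep α hα β hβ
  rw [edist_nndist, ENNReal.coe_lt_coe, ← NNReal.coe_lt_coe, coe_nndist, Real.dist_eq] at this
  exact this.le

/-- For all `u₁, u₂ ≤ u*`, the distance `ρ(A[u₁], B[u₂]) = inf{|α - β|}` is strictly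
positive, where the parameters are a prime `p`, a bound `w* > 0`, and
`r* = b₀*/(q₀*-1)` with `q₀* = p^{N₀*}`, `N₀* ≥ 2`, `gcd(b₀*, p(q₀*-1)) = 1`. -/
theorem stmt4 (p : ℕ) (hp : p.Prime) (w : ℝ) (hw : 0 < w)
    (N₀ b₀ q₀ : ℕ) (hN₀ : 2 ≤ N₀) (hq₀ : q₀ = p ^ N₀)
    (hb₀ : Nat.gcd b₀ (p * (q₀ - 1)) = 1)
    (r : ℝ) (hr : r = (b₀ : ℝ) / ((q₀ : ℝ) - 1))
    (ustar : ℕ) (u₁ u₂ : ℕ) (hu₁ : u₁ ≤ ustar) (hu₂ : u₂ ≤ ustar) :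
    ∃ ε > (0 : ℝ), ∀ α ∈ Aset p u₁ w, ∀ β ∈ Bset p u₂ r, ε ≤ |α - β| :=
  stmt4_general p hp w hw N₀ b₀ q₀ hN₀ hq₀ hb₀ r hr u₁ u₂
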